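/- arXiv:2203.11354 — 8 statements merged into one kernel-verified Lean document; each statement's English description precedes it below -/
import Mathlib

section
/- Let g : ℝ^d → ℝ be sublinear, let ‖·‖ be an absolute norm on ℝ^m with dual norm ‖·‖_*, let σ ∈ ℝ^d, Σ_1, …, Σ_m ∈ ℝ^d and b ∈ ℝ^m. Define s ∈ ℝ^m by s_j = max{g(Σ_j) + b_j, g(−Σ_j) − b_j} for j = 1, …, m. If g(σ) + ‖s‖_* ≤ 1, then for every ζ ∈ ℝ^m with ‖ζ‖ ≤ 1 one has g(σ + ∑_{j=1}^m ζ_j Σ_j) ≤ 1 − ⟨b, ζ⟩. -/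
/-!
Split `σ + ∑ ζ_j Σ_j` by subadditivity of `g`. Positive homogeneity applied to `ζ_j Σ_j` or to
`(-ζ_j)(-Σ_j)`, according to the sign of `ζ_j`, bounds each term `g (ζ_j Σ_j) + b_j ζ_j` by
`s_j |ζ_j|`. Since the norm is absolute, `|ζ|` also lies in the unit ball, so `⟨s, |ζ|⟩ ≤ ‖s‖_*`;
this supremum is finite, not a junk `sSup`, because an absolute norm dominates `|ζ_j| ‖e_j‖`.
-/

open Finset

section AbsoluteSeminorm

variable {ι : Type*} (p : Seminorm ℝ (ι → ℝ))

/-- `x` and `x` with all coordinates but the `j`-th negated have the same seminorm, and their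
average is `x j • Pi.single j 1`. -/
theorem Seminorm.abs_apply_mul_le_of_absolute [DecidableEq ι]
    (hp : ∀ x : ι → ℝ, p (fun j => |x j|) = p x) (x : ι → ℝ) (j : ι) :
    |x j| * p (Pi.single j 1) ≤ p x := by
  set y : ι → ℝ := fun i => if i = j then x i else -x i
  have hy : p y = p x := by
    rw [← hp y, ← hp x]
    congr 1
    ext i
    by_cases hi : i = j <;> simp [y, hi]
  have hxy : x + y = (2 * x j) • Pi.single j 1 := by
    ext i
    by_cases hi : i = j
    · subst hi; simp only [Pi.add_apply, ↓reduceIte, Pi.smul_apply, Pi.single_eq_same, smul_eq_mul,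
        mul_one, y]
      ring
    · simp [y, hi]
  have := map_add_le_add p x y
  rw [hxy, map_smul_eq_mul, Real.norm_eq_abs, abs_mul, hy] at this
  norm_num at this
  linarith

theorem Seminorm.bddAbove_sum_mul_of_absolute [Fintype ι]
    (hp_abs : ∀ x : ι → ℝ, p (fun j => |x j|) = p x) (hp_def : ∀ x, p x = 0 → x = 0)
    (s : ι → ℝ) :
    BddAbove {t : ℝ | ∃ ζ : ι → ℝ, p ζ ≤ 1 ∧ t = ∑ j, s j * ζ j} := by
  classical
  have hpos : ∀ j, 0 < p (Pi.single j 1) := fun j =>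
    (apply_nonneg p _).lt_of_ne fun h => by simpa using hp_def _ h.symm
  refine ⟨∑ j, |s j| / p (Pi.single j 1), ?_⟩
  rintro _ ⟨ζ, hζ, rfl⟩
  refine sum_le_sum fun j _ => ?_
  have hζj : |ζ j| ≤ 1 / p (Pi.single j 1) := by
    rw [le_div_iff₀ (hpos j)]
    exact (p.abs_apply_mul_le_of_absolute hp_abs ζ j).trans hζ
  calc s j * ζ j ≤ |s j| * |ζ j| := (le_abs_self _).trans (abs_mul _ _).le
    _ ≤ |s j| * (1 / p (Pi.single j 1)) := by gcongr
    _ = |s j| / p (Pi.single j 1) := by ring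

end AbsoluteSeminorm

theorem sublinear_smul_add_mul_le {E : Type*} [AddCommGroup E] [Module ℝ E] (g : E → ℝ)
    (hg_smul : ∀ t : ℝ, 0 ≤ t → ∀ x, g (t • x) = t * g x) (a : E) (b t : ℝ) :
    g (t • a) + b * t ≤ max (g a + b) (g (-a) - b) * |t| := by
  rcases le_or_gt 0 t with ht | ht
  · rw [hg_smul t ht, abs_of_nonneg ht]
    nlinarith [le_max_left (g a + b) (g (-a) - b)]
  · rw [← neg_smul_neg, hg_smul (-t) (by linarith), abs_of_neg ht]
    nlinarith [le_max_right (g a + b) (g (-a) - b)]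

/-- Bertsimas and Sim safe approximation for an uncertainty set given by the unit ball
of an absolute norm: if `g σ + ‖s‖_* ≤ 1` where `s j = max (g (Σ j) + b j) (g (-Σ j) - b j)`
and `‖·‖_*` is the dual norm, then the robust constraint
`g (σ + ∑ j ζ j • Σ j) ≤ 1 - ⟨b, ζ⟩` holds for all `ζ` in the unit ball of the norm. -/
theorem bertsimas_sim_approximation {d m : ℕ}
    (g : (Fin d → ℝ) → ℝ)
    (hg_add : ∀ x y, g (x + y) ≤ g x + g y)
    (hg_smul : ∀ t : ℝ, 0 ≤ t → ∀ x, g (t • x) = t * g x)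
    (Nm : (Fin m → ℝ) → ℝ)
    (hNm_add : ∀ x y, Nm (x + y) ≤ Nm x + Nm y)
    (hNm_smul : ∀ (c : ℝ) (x : Fin m → ℝ), Nm (c • x) = |c| * Nm x)
    (hNm_def : ∀ x, Nm x = 0 → x = 0)
    (hNm_abs : ∀ x : Fin m → ℝ, Nm (fun j => |x j|) = Nm x)
    (σ : Fin d → ℝ) (A : Fin m → (Fin d → ℝ)) (b : Fin m → ℝ)
    (s : Fin m → ℝ)
    (hs : ∀ j, s j = max (g (A j) + b j) (g (-A j) - b j))
    (h : g σ + sSup {t : ℝ | ∃ ζ : Fin m → ℝ, Nm ζ ≤ 1 ∧ t = ∑ j, s j * ζ j} ≤ 1) :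
    ∀ ζ : Fin m → ℝ, Nm ζ ≤ 1 →
      g (σ + ∑ j, ζ j • A j) ≤ 1 - ∑ j, b j * ζ j := by
  intro ζ hζ
  let p : Seminorm ℝ (Fin m → ℝ) := Seminorm.of Nm hNm_add hNm_smul
  have hdual :
      ∑ j, s j * |ζ j| ≤ sSup {t : ℝ | ∃ ζ : Fin m → ℝ, Nm ζ ≤ 1 ∧ t = ∑ j, s j * ζ j} :=
    le_csSup (p.bddAbove_sum_mul_of_absolute hNm_abs hNm_def s) ⟨_, (hNm_abs ζ).trans_le hζ, rfl⟩
  have hsplit : g (σ + ∑ j, ζ j • A j) ≤ g σ + ∑ j, g (ζ j • A j) :=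
    (hg_add _ _).trans <| add_le_add_right
      (le_sum_of_subadditive g (by simpa using hg_smul 0 le_rfl 0 : g 0 = 0).le hg_add _ _) _
  have hterms : ∑ j, (g (ζ j • A j) + b j * ζ j) ≤ ∑ j, s j * |ζ j| :=
    sum_le_sum fun j _ => hs j ▸ sublinear_smul_add_mul_le g hg_smul (A j) (b j) (ζ j)
  rw [sum_add_distrib] at hterms
  linarith
end

section
/- Let g : ℝ^d → ℝ be sublinear, σ ∈ ℝ^d, Σ_1, …, Σ_m ∈ ℝ^d and b ∈ ℝ^m. Suppose there exist w ∈ ℝ^m and W_1, …, W_m ∈ ℝ^d such that (i) ∑_{j=1}^m w_j + g(σ − ∑_{j=1}^m W_j) ≤ 1, (ii) g(W_j − Σ_j) − b_j ≤ w_j for all j, and (iii) g(W_j + Σ_j) + b_j ≤ w_j for all j. Then for every ζ ∈ ℝ^m with |ζ_j| ≤ 1 for all j, one has g(σ + ∑_{j=1}^m ζ_j Σ_j) + ⟨b, ζ⟩ ≤ 1. -/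
/-!
Each `W j + ζ j • A j` is the convex combination of `W j + A j` and `W j - A j` with weights
`(1 + ζ j) / 2` and `(1 - ζ j) / 2`, so sublinearity together with (ii) and (iii) gives
`g (W j + ζ j • A j) + b j * ζ j ≤ w j`. Writing `σ + ∑ ζ j • A j` as
`(σ - ∑ W j) + ∑ (W j + ζ j • A j)` and using subadditivity, the claim follows from (i).
-/

section Sublinear

variable {E : Type*} [AddCommGroup E] [Module ℝ E] {g : E → ℝ}

lemma sublinear_smul_add_smul_le (hg_add : ∀ x y, g (x + y) ≤ g x + g y)
    (hg_smul : ∀ t : ℝ, 0 ≤ t → ∀ x, g (t • x) = t * g x)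
    {t s : ℝ} (ht : 0 ≤ t) (hs : 0 ≤ s) (x y : E) :
    g (t • x + s • y) ≤ t * g x + s * g y := by
  rw [← hg_smul t ht, ← hg_smul s hs]
  exact hg_add _ _

lemma sublinear_add_smul_add_mul_le (hg_add : ∀ x y, g (x + y) ≤ g x + g y)
    (hg_smul : ∀ t : ℝ, 0 ≤ t → ∀ x, g (t • x) = t * g x)
    {W A : E} {β ω ζ : ℝ} (hζ : |ζ| ≤ 1)
    (h_sub : g (W - A) - β ≤ ω) (h_add : g (W + A) + β ≤ ω) :
    g (W + ζ • A) + β * ζ ≤ ω := by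
  obtain ⟨hζ_lower, hζ_upper⟩ := abs_le.mp hζ
  have ht : 0 ≤ (1 + ζ) / 2 := by linarith
  have hs : 0 ≤ (1 - ζ) / 2 := by linarith
  have h_comb : W + ζ • A = ((1 + ζ) / 2) • (W + A) + ((1 - ζ) / 2) • (W - A) := by module
  calc g (W + ζ • A) + β * ζ
      ≤ (1 + ζ) / 2 * g (W + A) + (1 - ζ) / 2 * g (W - A) + β * ζ := by
        rw [h_comb]; gcongr; exact sublinear_smul_add_smul_le hg_add hg_smul ht hs _ _
    _ = (1 + ζ) / 2 * (g (W + A) + β) + (1 - ζ) / 2 * (g (W - A) - β) := by ring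
    _ ≤ (1 + ζ) / 2 * ω + (1 - ζ) / 2 * ω := by gcongr
    _ = ω := by ring

end Sublinear

/-- Roos et al. safe approximation for the box uncertainty set: feasibility of the
auxiliary system `(w, W)` implies the robust constraint
`g (σ + ∑ j ζ j • Σ j) + ⟨b, ζ⟩ ≤ 1` for all `ζ` with `|ζ j| ≤ 1`. -/
theorem roos_approximation_box {d m : ℕ}
    (g : (Fin d → ℝ) → ℝ)
    (hg_add : ∀ x y, g (x + y) ≤ g x + g y)
    (hg_smul : ∀ t : ℝ, 0 ≤ t → ∀ x, g (t • x) = t * g x)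
    (σ : Fin d → ℝ) (A : Fin m → (Fin d → ℝ)) (b : Fin m → ℝ)
    (w : Fin m → ℝ) (W : Fin m → (Fin d → ℝ))
    (h1 : ∑ j, w j + g (σ - ∑ j, W j) ≤ 1)
    (h2 : ∀ j, g (W j - A j) - b j ≤ w j)
    (h3 : ∀ j, g (W j + A j) + b j ≤ w j) :
    ∀ ζ : Fin m → ℝ, (∀ j, |ζ j| ≤ 1) →
      g (σ + ∑ j, ζ j • A j) + ∑ j, b j * ζ j ≤ 1 := by
  intro ζ hζ
  have hg_zero : g 0 ≤ 0 := by simpa using (hg_smul 0 le_rfl 0).le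
  have h_split : σ + ∑ j, ζ j • A j = (σ - ∑ j, W j) + ∑ j, (W j + ζ j • A j) := by
    rw [Finset.sum_add_distrib]; abel
  have h_terms : ∑ j, (g (W j + ζ j • A j) + b j * ζ j) ≤ ∑ j, w j :=
    Finset.sum_le_sum fun j _ =>
      sublinear_add_smul_add_mul_le hg_add hg_smul (hζ j) (h2 j) (h3 j)
  have h_subadd : g (∑ j, (W j + ζ j • A j)) ≤ ∑ j, g (W j + ζ j • A j) :=
    Finset.le_sum_of_subadditive g hg_zero hg_add _ _
  rw [Finset.sum_add_distrib] at h_terms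
  rw [h_split]
  linarith [hg_add (σ - ∑ j, W j) (∑ j, (W j + ζ j • A j))]
end

section
/- Let m ≥ 1, let g : ℝ^d → ℝ be sublinear, σ ∈ ℝ^d, Σ_1, …, Σ_m ∈ ℝ^d and b ∈ ℝ^m. Suppose there exist w ∈ ℝ and W ∈ ℝ^d such that (i) w + g(σ − W) ≤ 1, (ii) g(W − Σ_j) − b_j ≤ w for all j, and (iii) g(W + Σ_j) + b_j ≤ w for all j. Then for every ζ ∈ ℝ^m with ∑_{j=1}^m |ζ_j| ≤ 1, one has g(σ + ∑_{j=1}^m ζ_j Σ_j) + ⟨b, ζ⟩ ≤ 1. -/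
/-- Roos et al. safe approximation for the cross-polytope uncertainty set: feasibility of
the auxiliary system `(w, W)` implies the robust constraint
`g (σ + ∑ j ζ j • Σ j) + ⟨b, ζ⟩ ≤ 1` for all `ζ` with `∑ j |ζ j| ≤ 1`. -/
theorem roos_approximation_cross_polytope {d m : ℕ} (hm : 1 ≤ m)
    (g : (Fin d → ℝ) → ℝ)
    (hg_add : ∀ x y, g (x + y) ≤ g x + g y)
    (hg_smul : ∀ t : ℝ, 0 ≤ t → ∀ x, g (t • x) = t * g x)
    (σ : Fin d → ℝ) (A : Fin m → (Fin d → ℝ)) (b : Fin m → ℝ)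
    (w : ℝ) (W : Fin d → ℝ)
    (h1 : w + g (σ - W) ≤ 1)
    (h2 : ∀ j, g (W - A j) - b j ≤ w)
    (h3 : ∀ j, g (W + A j) + b j ≤ w) :
    ∀ ζ : Fin m → ℝ, (∑ j, |ζ j|) ≤ 1 →
      g (σ + ∑ j, ζ j • A j) + ∑ j, b j * ζ j ≤ 1 := by
  intro ζ hζ
  have hg0 : g 0 = 0 := by
    have := hg_smul 0 le_rfl 0
    simpa using this
  have hsum : ∀ (t : Finset (Fin m)) (f : Fin m → Fin d → ℝ),
      g (∑ j ∈ t, f j) ≤ ∑ j ∈ t, g (f j) := by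
    intro t f
    induction t using Finset.cons_induction with
    | empty => simp [hg0]
    | cons a t ha ih =>
      rw [Finset.sum_cons, Finset.sum_cons]
      exact le_trans (hg_add _ _) (by linarith)
  set s := ∑ j, |ζ j| with hs
  have hs0 : 0 ≤ s := Finset.sum_nonneg fun j _ => abs_nonneg _
  have hgW : g W ≤ w := by
    have j : Fin m := ⟨0, hm⟩
    have h2' := h2 j
    have h3' := h3 j
    have key : g ((2:ℝ) • W) = 2 * g W := hg_smul 2 (by norm_num) W
    have hd : (2:ℝ) • W = (W - A j) + (W + A j) := by module
    have hadd := hg_add (W - A j) (W + A j)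
    rw [← hd, key] at hadd
    linarith
  set u : Fin m → Fin d → ℝ := fun j => |ζ j| • W + ζ j • A j with hu_def
  have hu : ∀ j, g (u j) ≤ |ζ j| * w - b j * ζ j := by
    intro j
    rcases le_or_gt 0 (ζ j) with h | h
    · have habs : |ζ j| = ζ j := abs_of_nonneg h
      have : u j = ζ j • (W + A j) := by
        simp only [hu_def, habs]; module
      rw [this, hg_smul _ h]
      have := h3 j
      rw [habs]
      nlinarith
    · have habs : |ζ j| = -ζ j := abs_of_neg h
      have : u j = (-ζ j) • (W - A j) := by
        simp only [hu_def, habs]; module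
      rw [this, hg_smul _ (by linarith)]
      have := h2 j
      rw [habs]
      nlinarith
  have husum : ∑ j, u j = s • W + ∑ j, ζ j • A j := by
    simp only [hu_def, Finset.sum_add_distrib, ← Finset.sum_smul, hs]
  have hdecomp : σ + ∑ j, ζ j • A j = (σ - W) + ((1 - s) • W + ∑ j, u j) := by
    rw [husum]; module
  have step1 : g (σ + ∑ j, ζ j • A j) ≤
      g (σ - W) + ((1 - s) * g W + ∑ j, g (u j)) := by
    rw [hdecomp]
    refine le_trans (hg_add _ _) ?_
    gcongr
    refine le_trans (hg_add _ _) ?_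
    rw [hg_smul _ (by linarith)]
    gcongr
    exact hsum _ _
  have step2 : ∑ j, g (u j) ≤ s * w - ∑ j, b j * ζ j := by
    have : ∑ j, g (u j) ≤ ∑ j, (|ζ j| * w - b j * ζ j) :=
      Finset.sum_le_sum fun j _ => hu j
    simpa [Finset.sum_sub_distrib, ← Finset.sum_mul, hs] using this
  have hW' : (1 - s) * g W ≤ (1 - s) * w := by
    apply mul_le_mul_of_nonneg_left hgW (by linarith)
  nlinarith
end

section
/- Let g : ℝ^d → ℝ be sublinear and nonnegative, σ ∈ ℝ^d, let Σ ∈ ℝ^{d×m}, b ∈ ℝ^m, and let the uncertainty set be U = {ζ ∈ ℝ^m : there exists ξ ∈ ℝ^q with D₁ζ + D₂ξ ≤ d componentwise}, where D₁ ∈ ℝ^{r×m}, D₂ ∈ ℝ^{r×q} and d ∈ ℝ^r. Suppose there exist v ∈ ℝ^r and a matrix V ∈ ℝ^{d×r} with columns V_1, …, V_r such that (i) g(σ − V d) + ⟨d, v⟩ ≤ 1, (ii) g(V_i) ≤ v_i for all i = 1, …, r, (iii) D₁ᵀ v = b, (iv) D₂ᵀ v = 0, (v) V D₁ + Σ = 0,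 and (vi) V D₂ = 0. Then for every ζ ∈ U, g(σ + Σζ) ≤ 1 − ⟨b, ζ⟩. -/
/-!
With the slack `w = d - (D₁ ζ + D₂ ξ) ≥ 0` of a point `ζ ∈ U`, conditions (v) and (vi) give
`σ + Σ ζ = (σ - V d) + V w`, and (iii), (iv) give `⟨w, v⟩ = ⟨d, v⟩ - ⟨b, ζ⟩`. Since `V w` is a
nonnegative combination of the columns of `V`, sublinearity and (ii) bound `g (V w)` by `⟨w, v⟩`,
and (i) finishes the estimate.
-/

open Matrix

section Sublinear

variable {E ι : Type*} [AddCommGroup E] [Module ℝ E] {g : E → ℝ}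

theorem map_zero_of_posHomogeneous (hg_smul : ∀ t : ℝ, 0 ≤ t → ∀ x, g (t • x) = t * g x) :
    g 0 = 0 := by
  simpa using hg_smul 0 le_rfl 0

theorem sublinear_sum_smul_le (hg_add : ∀ x y, g (x + y) ≤ g x + g y)
    (hg_smul : ∀ t : ℝ, 0 ≤ t → ∀ x, g (t • x) = t * g x)
    (s : Finset ι) {w : ι → ℝ} (hw : ∀ i ∈ s, 0 ≤ w i) (x : ι → E) :
    g (∑ i ∈ s, w i • x i) ≤ ∑ i ∈ s, w i * g (x i) :=
  calc g (∑ i ∈ s, w i • x i)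
      ≤ ∑ i ∈ s, g (w i • x i) :=
        Finset.le_sum_of_subadditive g (map_zero_of_posHomogeneous hg_smul).le hg_add s _
    _ = ∑ i ∈ s, w i * g (x i) := Finset.sum_congr rfl fun i hi => hg_smul _ (hw i hi) _

end Sublinear

theorem sublinear_mulVec_le_dotProduct {n ι : Type*} [Fintype ι]
    {g : (n → ℝ) → ℝ} (hg_add : ∀ x y, g (x + y) ≤ g x + g y)
    (hg_smul : ∀ t : ℝ, 0 ≤ t → ∀ x, g (t • x) = t * g x)
    {V : Matrix n ι ℝ} {v w : ι → ℝ} (hV : ∀ i, g (fun k => V k i) ≤ v i) (hw : 0 ≤ w) :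
    g (V *ᵥ w) ≤ w ⬝ᵥ v := by
  have hcols : V *ᵥ w = ∑ i, w i • fun k => V k i := by
    ext k
    simp [mulVec, dotProduct, Finset.sum_apply, mul_comm]
  calc g (V *ᵥ w)
      ≤ ∑ i, w i * g (fun k => V k i) :=
        hcols ▸ sublinear_sum_smul_le hg_add hg_smul _ (fun i _ => hw i) _
    _ ≤ ∑ i, w i * v i := Finset.sum_le_sum fun i _ => mul_le_mul_of_nonneg_left (hV i) (hw i)

theorem roos_approximation_polyhedral_general {dd m q r : ℕ}
    (g : (Fin dd → ℝ) → ℝ)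
    (hg_add : ∀ x y, g (x + y) ≤ g x + g y)
    (hg_smul : ∀ t : ℝ, 0 ≤ t → ∀ x, g (t • x) = t * g x)
    (σ : Fin dd → ℝ) (S : Matrix (Fin dd) (Fin m) ℝ) (b : Fin m → ℝ)
    (D₁ : Matrix (Fin r) (Fin m) ℝ) (D₂ : Matrix (Fin r) (Fin q) ℝ) (d : Fin r → ℝ)
    (v : Fin r → ℝ) (V : Matrix (Fin dd) (Fin r) ℝ)
    (h1 : g (σ - V *ᵥ d) + d ⬝ᵥ v ≤ 1)
    (h2 : ∀ i : Fin r, g (fun k => V k i) ≤ v i)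
    (h3 : D₁ᵀ *ᵥ v = b)
    (h4 : D₂ᵀ *ᵥ v = 0)
    (h5 : V * D₁ + S = 0)
    (h6 : V * D₂ = 0) :
    ∀ ζ : Fin m → ℝ, (∃ ξ : Fin q → ℝ, ∀ i : Fin r, (D₁ *ᵥ ζ + D₂ *ᵥ ξ) i ≤ d i) →
      g (σ + S *ᵥ ζ) ≤ 1 - b ⬝ᵥ ζ := by
  rintro ζ ⟨ξ, hξ⟩
  set w := d - (D₁ *ᵥ ζ + D₂ *ᵥ ξ)
  have hw : 0 ≤ w := fun i => sub_nonneg.mpr (hξ i)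
  have hdecomp : σ + S *ᵥ ζ = (σ - V *ᵥ d) + V *ᵥ w := by
    rw [eq_neg_of_add_eq_zero_right h5]
    simp only [w, mulVec_sub, mulVec_add, mulVec_mulVec, h6, zero_mulVec, neg_mulVec]
    abel
  have hslack : w ⬝ᵥ v = d ⬝ᵥ v - b ⬝ᵥ ζ := by
    simp only [w, sub_dotProduct, add_dotProduct, dotProduct_comm (_ *ᵥ _) v,
      dotProduct_mulVec, ← mulVec_transpose, h3, h4, zero_dotProduct]
    ring
  calc g (σ + S *ᵥ ζ)
      ≤ g (σ - V *ᵥ d) + g (V *ᵥ w) := hdecomp ▸ hg_add _ _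
    _ ≤ g (σ - V *ᵥ d) + w ⬝ᵥ v := by
        gcongr
        exact sublinear_mulVec_le_dotProduct hg_add hg_smul h2 hw
    _ ≤ 1 - b ⬝ᵥ ζ := by linarith

/-- Roos et al. safe approximation for a general polyhedral uncertainty set
`U = {ζ | ∃ ξ, D₁ ζ + D₂ ξ ≤ d}`: feasibility of the auxiliary system `(v, V)` implies the
robust constraint `g (σ + Σ ζ) ≤ 1 - ⟨b, ζ⟩` for all `ζ ∈ U`. -/
theorem roos_approximation_polyhedral {dd m q r : ℕ}
    (g : (Fin dd → ℝ) → ℝ)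
    (hg_add : ∀ x y, g (x + y) ≤ g x + g y)
    (hg_smul : ∀ t : ℝ, 0 ≤ t → ∀ x, g (t • x) = t * g x)
    (hg_nonneg : ∀ x, 0 ≤ g x)
    (σ : Fin dd → ℝ) (S : Matrix (Fin dd) (Fin m) ℝ) (b : Fin m → ℝ)
    (D₁ : Matrix (Fin r) (Fin m) ℝ) (D₂ : Matrix (Fin r) (Fin q) ℝ) (d : Fin r → ℝ)
    (v : Fin r → ℝ) (V : Matrix (Fin dd) (Fin r) ℝ)
    (h1 : g (σ - V *ᵥ d) + d ⬝ᵥ v ≤ 1)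
    (h2 : ∀ i : Fin r, g (fun k => V k i) ≤ v i)
    (h3 : D₁ᵀ *ᵥ v = b)
    (h4 : D₂ᵀ *ᵥ v = 0)
    (h5 : V * D₁ + S = 0)
    (h6 : V * D₂ = 0) :
    ∀ ζ : Fin m → ℝ, (∃ ξ : Fin q → ℝ, ∀ i : Fin r, (D₁ *ᵥ ζ + D₂ *ᵥ ξ) i ≤ d i) →
      g (σ + S *ᵥ ζ) ≤ 1 - b ⬝ᵥ ζ :=
  roos_approximation_polyhedral_general g hg_add hg_smul σ S b D₁ D₂ d v V h1 h2 h3 h4 h5 h6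
end

section
/- Let m ≥ 1, let g : ℝ^d → ℝ be sublinear, σ ∈ ℝ^d, Σ_1, …, Σ_m ∈ ℝ^d and b ∈ ℝ^m. Then the following are equivalent: (a) there exist w ∈ ℝ and W ∈ ℝ^d such that w + g(σ − W) ≤ 1, g(W − Σ_j) − b_j ≤ w for all j, and g(W + Σ_j) + b_j ≤ w for all j; (b) for every ζ ∈ ℝ^m with ∑_{j=1}^m |ζ_j| ≤ 1, one has g(σ + ∑_{j=1}^m ζ_j Σ_j) + ⟨b, ζ⟩ ≤ 1. (In other words, the Roos et al. approximation is exact for the cross-polytope uncertainty set.) -/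
/-!
For (b) ⇒ (a) take `W = σ`, `w = 1` and test (b) at the vertices `±eⱼ` of the cross-polytope.

For (a) ⇒ (b), the two constraints at any one index `j` give `g W ≤ w`, because
`2 • W = (W - Aⱼ) + (W + Aⱼ)`. With `t = ∑ |ζⱼ| ≤ 1`, decompose
`σ + ∑ ζⱼ • Aⱼ = (σ - W) + (1 - t) • W + ∑ (|ζⱼ| • W + ζⱼ • Aⱼ)`;
each summand `|ζⱼ| • W + ζⱼ • Aⱼ` is a nonnegative multiple of `W ± Aⱼ`, so sublinearity
bounds `g` of it by `|ζⱼ| * w - bⱼ * ζⱼ`, and the terms add up to `g (σ - W) + w - ⟨b, ζ⟩`.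
-/

open Finset

structure IsSublinear {E : Type*} [AddCommGroup E] [Module ℝ E] (g : E → ℝ) : Prop where
  map_add_le : ∀ x y, g (x + y) ≤ g x + g y
  map_smul : ∀ t : ℝ, 0 ≤ t → ∀ x, g (t • x) = t * g x

namespace IsSublinear

variable {E ι : Type*} [AddCommGroup E] [Module ℝ E] {g : E → ℝ}

theorem map_zero (hg : IsSublinear g) : g 0 = 0 := by
  simpa using hg.map_smul 0 le_rfl 0

theorem map_sum_le (hg : IsSublinear g) (s : Finset ι) (x : ι → E) :
    g (∑ i ∈ s, x i) ≤ ∑ i ∈ s, g (x i) :=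
  le_sum_of_subadditive g hg.map_zero.le hg.map_add_le s x

theorem le_of_map_sub_sub_le_of_map_add_add_le (hg : IsSublinear g) {W a : E} {β w : ℝ}
    (hsub : g (W - a) - β ≤ w) (hadd : g (W + a) + β ≤ w) : g W ≤ w := by
  have h2W : g ((2 : ℝ) • W) ≤ g (W - a) + g (W + a) := by
    rw [show (2 : ℝ) • W = (W - a) + (W + a) by module]
    exact hg.map_add_le _ _
  rw [hg.map_smul 2 zero_le_two] at h2W
  linarith

theorem map_abs_smul_add_smul_add_mul_le (hg : IsSublinear g) {W a : E} {β w : ℝ}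
    (hsub : g (W - a) - β ≤ w) (hadd : g (W + a) + β ≤ w) (c : ℝ) :
    g (|c| • W + c • a) + β * c ≤ |c| * w := by
  rcases le_or_gt 0 c with hc | hc
  · rw [abs_of_nonneg hc, ← smul_add, hg.map_smul c hc]
    nlinarith
  · rw [abs_of_neg hc, show -c • W + c • a = -c • (W - a) by module,
      hg.map_smul (-c) (by linarith)]
    nlinarith

theorem map_add_sum_smul_add_sum_mul_le [Fintype ι] [Nonempty ι] (hg : IsSublinear g)
    {σ W : E} {w : ℝ} {A : ι → E} {b : ι → ℝ} (hσ : w + g (σ - W) ≤ 1)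
    (hsub : ∀ j, g (W - A j) - b j ≤ w) (hadd : ∀ j, g (W + A j) + b j ≤ w)
    {ζ : ι → ℝ} (hζ : ∑ j, |ζ j| ≤ 1) :
    g (σ + ∑ j, ζ j • A j) + ∑ j, b j * ζ j ≤ 1 := by
  set t := ∑ j, |ζ j|
  obtain ⟨j₀⟩ := ‹Nonempty ι›
  have hgW : g W ≤ w := hg.le_of_map_sub_sub_le_of_map_add_add_le (hsub j₀) (hadd j₀)
  have hdecomp : σ + ∑ j, ζ j • A j
      = (σ - W) + ((1 - t) • W + ∑ j, (|ζ j| • W + ζ j • A j)) := by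
    rw [sum_add_distrib, ← sum_smul]
    module
  have hterms : ∑ j, g (|ζ j| • W + ζ j • A j) + ∑ j, b j * ζ j ≤ t * w := by
    rw [sum_mul, ← sum_add_distrib]
    exact sum_le_sum fun j _ =>
      hg.map_abs_smul_add_smul_add_mul_le (hsub j) (hadd j) (ζ j)
  have hsplit : g (σ + ∑ j, ζ j • A j) ≤
      g (σ - W) + ((1 - t) * g W + ∑ j, g (|ζ j| • W + ζ j • A j)) := by
    rw [hdecomp, ← hg.map_smul (1 - t) (by linarith)]
    refine (hg.map_add_le _ _).trans (add_le_add_right ?_ _)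
    exact (hg.map_add_le _ _).trans (add_le_add_right (hg.map_sum_le _ _) _)
  nlinarith [mul_le_mul_of_nonneg_left hgW (show 0 ≤ 1 - t by linarith)]

end IsSublinear

theorem map_add_smul_add_mul_le_of_forall_sum_abs_le_one {E ι : Type*} [AddCommGroup E]
    [Module ℝ E] [Fintype ι] [DecidableEq ι] {g : E → ℝ} {σ : E} {A : ι → E} {b : ι → ℝ}
    (h : ∀ ζ : ι → ℝ, ∑ j, |ζ j| ≤ 1 → g (σ + ∑ j, ζ j • A j) + ∑ j, b j * ζ j ≤ 1)
    (j : ι) {u : ℝ} (hu : |u| ≤ 1) : g (σ + u • A j) + b j * u ≤ 1 := by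
  simpa [Pi.single_apply, ite_smul, mul_ite, apply_ite abs] using h (Pi.single j u)
    (by simpa [Pi.single_apply, apply_ite abs] using hu)

/-- Exactness of the Roos et al. approximation for the cross-polytope uncertainty set:
feasibility of the auxiliary system `(w, W)` is equivalent to the robust constraint
`g (σ + ∑ j ζ j • Σ j) + ⟨b, ζ⟩ ≤ 1` for all `ζ` with `∑ j |ζ j| ≤ 1`. -/
theorem roos_exact_cross_polytope {d m : ℕ} (hm : 1 ≤ m)
    (g : (Fin d → ℝ) → ℝ)
    (hg_add : ∀ x y, g (x + y) ≤ g x + g y)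
    (hg_smul : ∀ t : ℝ, 0 ≤ t → ∀ x, g (t • x) = t * g x)
    (σ : Fin d → ℝ) (A : Fin m → (Fin d → ℝ)) (b : Fin m → ℝ) :
    (∃ (w : ℝ) (W : Fin d → ℝ),
        w + g (σ - W) ≤ 1 ∧
        (∀ j, g (W - A j) - b j ≤ w) ∧
        (∀ j, g (W + A j) + b j ≤ w)) ↔
      (∀ ζ : Fin m → ℝ, (∑ j, |ζ j|) ≤ 1 →
        g (σ + ∑ j, ζ j • A j) + ∑ j, b j * ζ j ≤ 1) := by
  have hg : IsSublinear g := ⟨hg_add, hg_smul⟩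
  have : Nonempty (Fin m) := ⟨⟨0, hm⟩⟩
  constructor
  · rintro ⟨w, W, hσ, hsub, hadd⟩ ζ hζ
    exact hg.map_add_sum_smul_add_sum_mul_le hσ hsub hadd hζ
  · intro h
    have hvertex := map_add_smul_add_mul_le_of_forall_sum_abs_le_one h
    refine ⟨1, σ, by simp [hg.map_zero], fun j => ?_, fun j => ?_⟩
    · have := hvertex j (u := -1) (by norm_num)
      rw [neg_one_smul, ← sub_eq_add_neg] at this
      linarith
    · simpa using hvertex j (u := 1) (by norm_num)
end

section
/- Let Γ ≥ 0 and z ∈ ℝ^m. Then the support function of the budget uncertainty set U_budget(Γ) = {ζ ∈ ℝ^m : ‖ζ‖_∞ ≤ 1 and ‖ζ‖_1 ≤ Γ} equals the infimal convolution of the ℓ¹-norm and Γ times the ℓ∞-norm: sup{⟨z, ζ⟩ : ζ ∈ U_budget(Γ)} = inf{‖y‖_1 + Γ·‖z − y‖_∞ : y ∈ ℝ^m}. -/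
open Finset

private lemma abs_sign_le (x : ℝ) : |Real.sign x| ≤ 1 := by
  rcases lt_trichotomy x 0 with h|h|h
  · simp [Real.sign_of_neg h]
  · simp [h, Real.sign_zero]
  · simp [Real.sign_of_pos h]

private lemma abs_sign_of_ne {x : ℝ} (h : x ≠ 0) : |Real.sign x| = 1 := by
  rcases h.lt_or_gt with h|h
  · simp [Real.sign_of_neg h]
  · simp [Real.sign_of_pos h]

private lemma sign_mul_abs_self (x : ℝ) : Real.sign x * |x| = x := by
  rcases lt_trichotomy x 0 with h|h|h
  · simp [Real.sign_of_neg h, abs_of_neg h]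
  · simp [h]
  · simp [Real.sign_of_pos h, abs_of_pos h]

private lemma mul_sign_self (x : ℝ) : x * Real.sign x = |x| := by
  rcases lt_trichotomy x 0 with h|h|h
  · simp [Real.sign_of_neg h, abs_of_neg h]
  · simp [h]
  · simp [Real.sign_of_pos h, abs_of_pos h]

private lemma sum_split_aux {m : ℕ} (P Q : Fin m → Prop) [DecidablePred P] [DecidablePred Q]
    (hPQ : ∀ j, Q j → ¬ P j) (f g : Fin m → ℝ) :
    ∑ j, (if P j then f j else if Q j then g j else 0) =
      (∑ j ∈ Finset.univ.filter P, f j) + (∑ j ∈ Finset.univ.filter Q, g j) := by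
  rw [Finset.sum_ite]
  congr 1
  rw [← Finset.sum_filter]
  congr 1
  ext j
  simp only [Finset.mem_filter, Finset.mem_univ, true_and]
  exact ⟨fun h => h.2, fun h => ⟨hPQ j h, h⟩⟩

private lemma weak_dual {m : ℕ} {Γ : ℝ} (z ζ y : Fin m → ℝ)
    (hinf : ∀ j, |ζ j| ≤ 1) (h1 : ∑ j, |ζ j| ≤ Γ) :
    ∑ j, z j * ζ j ≤ (∑ j, |y j|) + Γ * (⨆ j, |z j - y j|) := by
  set M := ⨆ j, |z j - y j| with hM
  have hM0 : 0 ≤ M := Real.iSup_nonneg (fun j => abs_nonneg _)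
  have hMj : ∀ j, |z j - y j| ≤ M := by
    intro j
    rw [hM]
    exact le_ciSup (f := fun j => |z j - y j|) (Set.Finite.bddAbove (Set.finite_range _)) j
  have step1 : ∑ j, z j * ζ j ≤ ∑ j, (|y j| + M * |ζ j|) := by
    apply Finset.sum_le_sum
    intro j _
    have h1' : y j * ζ j ≤ |y j| := by
      calc y j * ζ j ≤ |y j * ζ j| := le_abs_self _
        _ = |y j| * |ζ j| := abs_mul _ _
        _ ≤ |y j| := mul_le_of_le_one_right (abs_nonneg _) (hinf j)
    have h2' : (z j - y j) * ζ j ≤ M * |ζ j| := by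
      calc (z j - y j) * ζ j ≤ |(z j - y j) * ζ j| := le_abs_self _
        _ = |z j - y j| * |ζ j| := abs_mul _ _
        _ ≤ M * |ζ j| := mul_le_mul_of_nonneg_right (hMj j) (abs_nonneg _)
    calc z j * ζ j = y j * ζ j + (z j - y j) * ζ j := by ring
      _ ≤ |y j| + M * |ζ j| := add_le_add h1' h2'
  calc ∑ j, z j * ζ j ≤ ∑ j, (|y j| + M * |ζ j|) := step1
    _ = (∑ j, |y j|) + M * ∑ j, |ζ j| := by
        rw [Finset.sum_add_distrib, Finset.mul_sum]
    _ ≤ (∑ j, |y j|) + Γ * M := by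
        have h2 : M * ∑ j, |ζ j| ≤ Γ * M := by
          rw [mul_comm Γ M]
          exact mul_le_mul_of_nonneg_left h1 hM0
        linarith

private lemma strong_dual {m : ℕ} (Γ : ℝ) (hΓ : 0 ≤ Γ) (z : Fin m → ℝ) :
    ∃ ζ : Fin m → ℝ, (∀ j, |ζ j| ≤ 1) ∧ (∑ j, |ζ j|) ≤ Γ ∧
      ∃ y : Fin m → ℝ, (∑ j, |y j|) + Γ * (⨆ j, |z j - y j|) ≤ ∑ j, z j * ζ j := by
  classical
  by_cases hA : ((Finset.univ.filter fun j => z j ≠ 0).card : ℝ) ≤ Γ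
  · -- Case A : take ζ = sign z, y = z
    refine ⟨fun j => Real.sign (z j), fun j => abs_sign_le (z j), ?_, z, ?_⟩
    · have h1 : ∑ j, |Real.sign (z j)| =
          ((Finset.univ.filter fun j => z j ≠ 0).card : ℝ) := by
        rw [Finset.card_filter]
        push_cast
        apply Finset.sum_congr rfl
        intro j _
        by_cases h : z j = 0
        · simp [h]
        · simp [h, abs_sign_of_ne h]
      rw [h1]; exact hA
    · have h0 : (⨆ j, |z j - z j|) = (0:ℝ) := by simp
      have h2 : ∑ j, z j * Real.sign (z j) = ∑ j, |z j| :=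
        Finset.sum_congr rfl (fun j _ => mul_sign_self (z j))
      rw [h0, h2, mul_zero, add_zero]
  · push_neg at hA
    set s : Finset ℝ := Finset.univ.image (fun j => |z j|) with hs
    have hmne : (Finset.univ.filter fun j => z j ≠ 0).Nonempty := by
      rw [← Finset.card_pos]
      by_contra h
      push_neg at h
      interval_cases h' : (Finset.univ.filter fun j => z j ≠ 0).card
      · simp at hA; linarith
    obtain ⟨j₀, hj₀⟩ := hmne
    have : Nonempty (Fin m) := ⟨j₀⟩
    have hsne : s.Nonempty := ⟨|z j₀|, Finset.mem_image_of_mem _ (Finset.mem_univ _)⟩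
    set S : Finset ℝ :=
      s.filter (fun v => ((Finset.univ.filter fun j => v < |z j|).card : ℝ) ≤ Γ) with hS
    have hSne : S.Nonempty := by
      refine ⟨s.max' hsne, Finset.mem_filter.mpr ⟨s.max'_mem hsne, ?_⟩⟩
      have he : (Finset.univ.filter fun j => s.max' hsne < |z j|) = ∅ := by
        rw [Finset.filter_eq_empty_iff]
        intro j _
        exact not_lt.mpr (s.le_max' _ (Finset.mem_image_of_mem _ (Finset.mem_univ j)))
      rw [he]
      simpa using hΓ
    set τ : ℝ := S.min' hSne with hτ
    have hτS : τ ∈ S := S.min'_mem hSne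
    have hτs : τ ∈ s := (Finset.mem_filter.mp hτS).1
    have hgτ : ((Finset.univ.filter fun j => τ < |z j|).card : ℝ) ≤ Γ :=
      (Finset.mem_filter.mp hτS).2
    obtain ⟨i₀, -, hi₀⟩ := Finset.mem_image.mp hτs
    have hτ0 : 0 ≤ τ := hi₀ ▸ abs_nonneg _
    have hτpos : 0 < τ := by
      rcases hτ0.lt_or_eq with h|h
      · exact h
      · exfalso
        have he : (Finset.univ.filter fun j => τ < |z j|) =
            Finset.univ.filter fun j => z j ≠ 0 := by
          ext j; simp [← h, abs_pos]
        rw [he] at hgτ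
        linarith
    -- index sets
    set G : Finset (Fin m) := Finset.univ.filter (fun j => τ < |z j|) with hG
    set T : Finset (Fin m) := Finset.univ.filter (fun j => |z j| = τ) with hT
    set GT : Finset (Fin m) := Finset.univ.filter (fun j => τ ≤ |z j|) with hGT
    have hsplit : GT = G ∪ T := by
      ext j
      simp only [hG, hT, hGT, Finset.mem_filter, Finset.mem_union, Finset.mem_univ, true_and]
      constructor
      · intro h
        rcases h.lt_or_eq with h'|h'
        · exact Or.inl h'
        · exact Or.inr h'.symm
      · rintro (h|h)
        · exact h.le
        · exact h.ge
    have hdisj : Disjoint G T := by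
      rw [Finset.disjoint_left]
      intro j hjG hjT
      rw [hG, Finset.mem_filter] at hjG
      rw [hT, Finset.mem_filter] at hjT
      exact absurd hjT.2 (ne_of_gt hjG.2)
    have hcard : GT.card = G.card + T.card := by
      rw [hsplit, Finset.card_union_of_disjoint hdisj]
    have hΓGT : Γ < (GT.card : ℝ) := by
      by_contra hcon
      push_neg at hcon
      by_cases hlow : ∃ v ∈ s, v < τ
      · have hfne : (s.filter (fun v => v < τ)).Nonempty := by
          obtain ⟨v, hv1, hv2⟩ := hlow
          exact ⟨v, Finset.mem_filter.mpr ⟨hv1, hv2⟩⟩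
        set t : ℝ := (s.filter (fun v => v < τ)).max' hfne with ht
        have hts : t ∈ s ∧ t < τ := by
          have := (s.filter (fun v => v < τ)).max'_mem hfne
          rw [Finset.mem_filter] at this
          exact this
        have heq : (Finset.univ.filter fun j => t < |z j|) = GT := by
          ext j
          simp only [hGT, Finset.mem_filter, Finset.mem_univ, true_and]
          constructor
          · intro h
            by_contra h2
            push_neg at h2
            have hmem : |z j| ∈ s.filter (fun v => v < τ) := Finset.mem_filter.mpr
              ⟨Finset.mem_image_of_mem _ (Finset.mem_univ j), h2⟩
            have hle : |z j| ≤ t := Finset.le_max' _ _ hmem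
            linarith
          · intro h
            linarith [hts.2]
        have htS : t ∈ S := by
          refine Finset.mem_filter.mpr ⟨hts.1, ?_⟩
          rw [heq]
          exact hcon
        have := S.min'_le t htS
        linarith [hts.2]
      · push_neg at hlow
        have hGTuniv : GT = Finset.univ := by
          ext j
          simp only [hGT, Finset.mem_filter, Finset.mem_univ, true_and, iff_true]
          exact hlow _ (Finset.mem_image_of_mem _ (Finset.mem_univ j))
        have hle : ((Finset.univ.filter fun j => z j ≠ 0).card : ℝ) ≤ (GT.card : ℝ) := by
          have := Finset.card_le_card (show (Finset.univ.filter fun j => z j ≠ 0) ⊆ GT by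
            rw [hGTuniv]; exact Finset.subset_univ _)
          exact_mod_cast this
        linarith
    have hGle : ((G.card : ℝ)) ≤ Γ := hgτ
    have hTpos : 0 < (T.card : ℝ) := by
      have h1 : ((G.card : ℝ)) < (GT.card : ℝ) := lt_of_le_of_lt hGle hΓGT
      have h2 : ((GT.card : ℝ)) = (G.card : ℝ) + (T.card : ℝ) := by
        rw [hcard]; push_cast; ring
      linarith
    set α : ℝ := (Γ - G.card) / T.card with hα
    have hα0 : 0 ≤ α := div_nonneg (by linarith) hTpos.le
    have hαT : α * T.card = Γ - G.card := div_mul_cancel₀ _ (ne_of_gt hTpos)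
    have hα1 : α ≤ 1 := by
      rw [hα, div_le_one hTpos]
      have h2 : ((GT.card : ℝ)) = (G.card : ℝ) + (T.card : ℝ) := by
        rw [hcard]; push_cast; ring
      linarith
    have hGne : ∀ j, τ < |z j| → z j ≠ 0 := by
      intro j h hz
      rw [hz] at h; simp at h; linarith
    have hTne : ∀ j, |z j| = τ → z j ≠ 0 := by
      intro j h hz
      rw [hz] at h; simp at h; linarith
    set ζ : Fin m → ℝ := fun j =>
      if τ < |z j| then Real.sign (z j)
      else if |z j| = τ then α * Real.sign (z j) else 0 with hζ
    have habs : ∀ j, |ζ j| = if τ < |z j| then (1:ℝ) else if |z j| = τ then α else 0 := by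
      intro j
      simp only [hζ]
      split_ifs with h1 h2
      · exact abs_sign_of_ne (hGne j h1)
      · rw [abs_mul, abs_sign_of_ne (hTne j h2), mul_one, abs_of_nonneg hα0]
      · simp
    have hsum1 : ∑ j, |ζ j| = Γ := by
      rw [Finset.sum_congr rfl (fun j _ => habs j),
        sum_split_aux _ _ (fun j h2 => by rw [h2]; exact lt_irrefl τ)]
      rw [Finset.sum_const, Finset.sum_const, nsmul_eq_mul, nsmul_eq_mul, mul_one, mul_comm, hαT]
      · ring
    have hpay : ∀ j, z j * ζ j =
        if τ < |z j| then |z j| else (if |z j| = τ then α * τ else 0) := by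
      intro j
      simp only [hζ]
      split_ifs with h1 h2
      · exact mul_sign_self (z j)
      · rw [show z j * (α * Real.sign (z j)) = α * (z j * Real.sign (z j)) by ring,
          mul_sign_self (z j), h2]
      · exact mul_zero _
    have hsumpay : ∑ j, z j * ζ j = (∑ j ∈ G, |z j|) + α * τ * T.card := by
      rw [Finset.sum_congr rfl (fun j _ => hpay j),
        sum_split_aux _ _ (fun j h2 => by rw [h2]; exact lt_irrefl τ)]
      rw [Finset.sum_const, nsmul_eq_mul]
      ring
    set y : Fin m → ℝ := fun j =>
      if τ ≤ |z j| then Real.sign (z j) * (|z j| - τ) else 0 with hy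
    have hyabs : ∀ j, |y j| = if τ ≤ |z j| then |z j| - τ else 0 := by
      intro j
      simp only [hy]
      split_ifs with h1
      · have hzne : z j ≠ 0 := by
          intro hz; rw [hz] at h1; simp at h1; linarith
        rw [abs_mul, abs_sign_of_ne hzne, one_mul, abs_of_nonneg (by linarith)]
      · simp
    refine ⟨ζ, fun j => ?_, le_of_eq hsum1, y, ?_⟩
    · rw [habs j]
      split_ifs with h1 h2
      · exact le_refl 1
      · exact hα1
      · exact zero_le_one
    · have hGsub : G ⊆ GT := by
        intro j hj
        rw [hG, Finset.mem_filter] at hj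
        rw [hGT, Finset.mem_filter]
        exact ⟨hj.1, hj.2.le⟩
      have hzero : ∀ j ∈ GT, j ∉ G → |z j| - τ = 0 := by
        intro j hj hnj
        rw [hGT, Finset.mem_filter] at hj
        rw [hG, Finset.mem_filter] at hnj
        have : ¬ τ < |z j| := fun h => hnj ⟨Finset.mem_univ _, h⟩
        have : |z j| = τ := le_antisymm (not_lt.mp this) hj.2
        rw [this, sub_self]
      have hsumy : ∑ j, |y j| = (∑ j ∈ G, |z j|) - G.card * τ := by
        rw [Finset.sum_congr rfl (fun j _ => hyabs j), ← Finset.sum_filter,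
          ← Finset.sum_subset hGsub hzero, Finset.sum_sub_distrib, Finset.sum_const,
          nsmul_eq_mul]
      have hsup : (⨆ j, |z j - y j|) ≤ τ := by
        apply ciSup_le
        intro j
        simp only [hy]
        split_ifs with h1
        · have hzne : z j ≠ 0 := by
            intro hz; rw [hz] at h1; simp at h1; linarith
          rw [mul_sub, sign_mul_abs_self,
            show z j - (z j - Real.sign (z j) * τ) = Real.sign (z j) * τ by ring,
            abs_mul, abs_sign_of_ne hzne, one_mul, abs_of_nonneg hτpos.le]
        · rw [sub_zero]
          exact (not_le.mp h1).le
      have hΓsup : Γ * (⨆ j, |z j - y j|) ≤ Γ * τ := mul_le_mul_of_nonneg_left hsup hΓ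
      have hfin : α * τ * T.card = (Γ - G.card) * τ := by
        rw [mul_comm α τ, mul_assoc, hαT, mul_comm]
      rw [hsumpay, hsumy]
      linarith

/-- The support function of the budget uncertainty set
`U_budget(Γ) = {ζ : ‖ζ‖_∞ ≤ 1 ∧ ‖ζ‖_1 ≤ Γ}` equals the infimal convolution of the
`ℓ¹`-norm and `Γ` times the `ℓ∞`-norm. -/
theorem support_function_budget {m : ℕ} (Γ : ℝ) (hΓ : 0 ≤ Γ) (z : Fin m → ℝ) :
    sSup {t : ℝ | ∃ ζ : Fin m → ℝ, (∀ j, |ζ j| ≤ 1) ∧ (∑ j, |ζ j|) ≤ Γ ∧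
        t = ∑ j, z j * ζ j} =
      sInf {t : ℝ | ∃ y : Fin m → ℝ,
        t = (∑ j, |y j|) + Γ * (⨆ j, |z j - y j|)} := by
  set A := {t : ℝ | ∃ ζ : Fin m → ℝ, (∀ j, |ζ j| ≤ 1) ∧ (∑ j, |ζ j|) ≤ Γ ∧
      t = ∑ j, z j * ζ j} with hA
  set B := {t : ℝ | ∃ y : Fin m → ℝ,
      t = (∑ j, |y j|) + Γ * (⨆ j, |z j - y j|)} with hB
  have hAne : A.Nonempty := by
    refine ⟨0, fun _ => 0, by simp, by simpa using hΓ, by simp⟩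
  have hBne : B.Nonempty := ⟨_, fun _ => (0:ℝ), rfl⟩
  have hweak : ∀ a ∈ A, ∀ b ∈ B, a ≤ b := by
    rintro a ⟨ζ, h1, h2, rfl⟩ b ⟨y, rfl⟩
    exact weak_dual z ζ y h1 h2
  obtain ⟨ζ, hζ1, hζ2, y, hyζ⟩ := strong_dual Γ hΓ z
  apply le_antisymm
  · exact csSup_le hAne (fun a ha => le_csInf hBne (fun b hb => hweak a ha b hb))
  · have haA : (∑ j, z j * ζ j) ∈ A := ⟨ζ, hζ1, hζ2, rfl⟩
    have hbB : ((∑ j, |y j|) + Γ * ⨆ j, |z j - y j|) ∈ B := ⟨y, rfl⟩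
    obtain ⟨a0, ha0⟩ := hAne
    obtain ⟨b0, hb0⟩ := hBne
    have hbdd1 : BddBelow B := ⟨a0, fun b hb => hweak a0 ha0 b hb⟩
    have hbdd2 : BddAbove A := ⟨b0, fun a ha => hweak a ha b0 hb0⟩
    calc sInf B ≤ (∑ j, |y j|) + Γ * ⨆ j, |z j - y j| := csInf_le hbdd1 hbB
      _ ≤ ∑ j, z j * ζ j := hyζ
      _ ≤ sSup A := le_csSup hbdd2 haA
end

section
/- Let Γ ≥ 0 and z ∈ ℝ^m. Then the support function of the one-sided budget uncertainty set U⁺(Γ) = {ζ ∈ ℝ^m : 0 ≤ ζ_j ≤ 1 for all j and ∑_{j=1}^m ζ_j ≤ Γ} satisfies sup{⟨z, ζ⟩ : ζ ∈ U⁺(Γ)} = inf{∑_{j=1}^m max{y_j, 0} + Γ·‖z − y‖_∞ : y ∈ ℝ^m}. -/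
private lemma exists_topk {m : ℕ} (z : Fin m → ℝ) (k : ℕ) (hk : k ≤ m) :
    ∃ A : Finset (Fin m), A.card = k ∧ ∀ j ∉ A, ∀ i ∈ A, z j ≤ z i := by
  induction k with
  | zero => exact ⟨∅, rfl, by simp⟩
  | succ k ih =>
    obtain ⟨A, hcard, hA⟩ := ih (Nat.le_of_succ_le hk)
    have hne : (Aᶜ : Finset (Fin m)).Nonempty := by
      rw [← Finset.card_pos, Finset.card_compl, hcard, Fintype.card_fin]
      omega
    obtain ⟨i0, hi0, hmax⟩ := Finset.exists_max_image Aᶜ z hne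
    have hi0A : i0 ∉ A := Finset.mem_compl.mp hi0
    refine ⟨insert i0 A, ?_, ?_⟩
    · rw [Finset.card_insert_of_notMem hi0A, hcard]
    · intro j hj i hi
      rcases Finset.mem_insert.mp hi with rfl | hiA
      · exact hmax j (Finset.mem_compl.mpr fun h => hj (Finset.mem_insert_of_mem h))
      · exact hA j (fun h => hj (Finset.mem_insert_of_mem h)) i hiA

private lemma weak_duality {m : ℕ} (Γ : ℝ) (z ζ y : Fin m → ℝ)
    (hζ : ∀ j, 0 ≤ ζ j ∧ ζ j ≤ 1) (hsum : (∑ j, ζ j) ≤ Γ) :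
    ∑ j, z j * ζ j ≤ (∑ j, max (y j) 0) + Γ * (⨆ j, |z j - y j|) := by
  set M := ⨆ j, |z j - y j| with hM
  have hMnn : 0 ≤ M := Real.iSup_nonneg fun j => abs_nonneg _
  have hle : ∀ j, |z j - y j| ≤ M := by
    intro j
    rw [hM]
    exact le_ciSup (f := fun j => |z j - y j|) (Set.Finite.bddAbove (Set.finite_range _)) j
  have key : ∀ j, z j * ζ j ≤ M * ζ j + max (y j) 0 := by
    intro j
    have h1 : (z j - y j) * ζ j ≤ M * ζ j :=
      mul_le_mul_of_nonneg_right ((le_abs_self _).trans (hle j)) (hζ j).1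
    have h2 : y j * ζ j ≤ max (y j) 0 := by
      rcases le_or_gt 0 (y j) with h | h
      · calc y j * ζ j ≤ y j * 1 := by nlinarith [(hζ j).2]
          _ ≤ max (y j) 0 := by simp
      · exact (mul_nonpos_of_nonpos_of_nonneg h.le (hζ j).1).trans (le_max_right _ _)
    nlinarith
  calc ∑ j, z j * ζ j ≤ ∑ j, (M * ζ j + max (y j) 0) := Finset.sum_le_sum fun j _ => key j
    _ = M * (∑ j, ζ j) + ∑ j, max (y j) 0 := by rw [Finset.sum_add_distrib, ← Finset.mul_sum]
    _ ≤ M * Γ + ∑ j, max (y j) 0 := by nlinarith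
    _ = _ := by ring

/-- The support function of the one-sided budget uncertainty set
`U⁺(Γ) = {ζ : 0 ≤ ζ_j ≤ 1 ∧ ∑_j ζ_j ≤ Γ}` equals the infimal convolution
`inf_y {∑_j max (y_j) 0 + Γ ‖z - y‖_∞}`. -/
theorem support_function_one_sided_budget {m : ℕ} (Γ : ℝ) (hΓ : 0 ≤ Γ) (z : Fin m → ℝ) :
    sSup {t : ℝ | ∃ ζ : Fin m → ℝ, (∀ j, 0 ≤ ζ j ∧ ζ j ≤ 1) ∧ (∑ j, ζ j) ≤ Γ ∧
        t = ∑ j, z j * ζ j} =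
      sInf {t : ℝ | ∃ y : Fin m → ℝ,
        t = (∑ j, max (y j) 0) + Γ * (⨆ j, |z j - y j|)} := by
  set S := {t : ℝ | ∃ ζ : Fin m → ℝ, (∀ j, 0 ≤ ζ j ∧ ζ j ≤ 1) ∧ (∑ j, ζ j) ≤ Γ ∧
        t = ∑ j, z j * ζ j} with hS
  set D := {t : ℝ | ∃ y : Fin m → ℝ,
        t = (∑ j, max (y j) 0) + Γ * (⨆ j, |z j - y j|)} with hD
  have hsup0 : (⨆ j : Fin m, |z j - z j|) = 0 := by simp
  have hSne : S.Nonempty := ⟨0, fun _ => 0, fun j => ⟨le_refl 0, zero_le_one⟩, by simpa, by simp⟩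
  have hDne : D.Nonempty := ⟨∑ j, max (z j) 0, z, by rw [hsup0]; ring⟩
  have hweak : ∀ s ∈ S, ∀ d ∈ D, s ≤ d := by
    rintro s ⟨ζ, hζ, hsum, rfl⟩ d ⟨y, rfl⟩
    exact weak_duality Γ z ζ y hζ hsum
  obtain ⟨d0, hd0⟩ := hDne
  obtain ⟨s0, hs0⟩ := hSne
  have hDne : D.Nonempty := ⟨d0, hd0⟩
  have hSne : S.Nonempty := ⟨s0, hs0⟩
  have hbddS : BddAbove S := ⟨d0, fun s hs => hweak s hs d0 hd0⟩
  have hbddD : BddBelow D := ⟨s0, fun d hd => hweak s0 hs0 d hd⟩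
  -- strong duality: a common value in both sets
  have hstrong : ∃ v, v ∈ S ∧ v ∈ D := by
    set p := (Finset.univ.filter (fun j => 0 < z j)).card with hp
    rcases le_or_gt (p : ℝ) Γ with hcase | hcase
    · -- all positive coordinates can be set to 1
      refine ⟨∑ j, max (z j) 0, ⟨fun j => if 0 < z j then 1 else 0, ?_, ?_, ?_⟩,
        z, by rw [hsup0]; ring⟩
      · intro j; dsimp only; split <;> norm_num
      · rw [Finset.sum_boole]; exact hcase
      · refine Finset.sum_congr rfl fun j _ => ?_
        dsimp only
        rcases lt_or_ge 0 (z j) with h | h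
        · rw [if_pos h, max_eq_left h.le, mul_one]
        · rw [if_neg (not_lt.mpr h), max_eq_right h, mul_zero]
    · -- Γ < p : take top ⌊Γ⌋ coordinates plus a fractional one
      set k := ⌊Γ⌋₊ with hk
      have hkΓ : (k : ℝ) ≤ Γ := Nat.floor_le hΓ
      have hΓk1 : Γ < (k : ℝ) + 1 := by exact_mod_cast Nat.lt_floor_add_one Γ
      have hkp : k < p := by exact_mod_cast hkΓ.trans_lt hcase
      have hpm : p ≤ m := by
        have := Finset.card_filter_le (Finset.univ : Finset (Fin m)) (fun j => 0 < z j)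
        simpa using this
      obtain ⟨A, hcard, hA⟩ := exists_topk z k (le_trans hkp.le hpm)
      have hApos : ∀ i ∈ A, 0 < z i := by
        by_contra h
        push_neg at h
        obtain ⟨i, hiA, hzi⟩ := h
        have hsub : Finset.univ.filter (fun j => 0 < z j) ⊆ A := by
          intro j hj
          by_contra hjA
          have := hA j hjA i hiA
          have hzj : 0 < z j := (Finset.mem_filter.mp hj).2
          linarith
        have := Finset.card_le_card hsub
        omega
      have hAcne : (Aᶜ : Finset (Fin m)).Nonempty := by
        rw [← Finset.card_pos, Finset.card_compl, hcard, Fintype.card_fin]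
        omega
      obtain ⟨j0, hj0c, hj0max⟩ := Finset.exists_max_image Aᶜ z hAcne
      have hj0A : j0 ∉ A := Finset.mem_compl.mp hj0c
      -- there is a positive coordinate outside A
      have hj0pos : 0 < z j0 := by
        have hnsub : ¬ Finset.univ.filter (fun j => 0 < z j) ⊆ A := by
          intro hsub
          have := Finset.card_le_card hsub
          omega
        obtain ⟨j1, hj1, hj1A⟩ := Finset.not_subset.mp hnsub
        have hzj1 : 0 < z j1 := (Finset.mem_filter.mp hj1).2
        exact lt_of_lt_of_le hzj1 (hj0max j1 (Finset.mem_compl.mpr hj1A))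
      have hzA : ∀ i ∈ A, z j0 ≤ z i := hA j0 hj0A
      have hne : Nonempty (Fin m) := ⟨j0⟩
      set lam := z j0 with hlam
      set ζ : Fin m → ℝ := fun j => if j ∈ A then 1 else if j = j0 then Γ - k else 0 with hζdef
      have hζsumA : ∑ j ∈ A, ζ j = (k : ℝ) := by
        rw [Finset.sum_congr rfl (fun j hj => if_pos hj)]
        simp [hcard]
      have hζsumAc : ∑ j ∈ Aᶜ, ζ j = Γ - k := by
        rw [Finset.sum_congr rfl (fun j hj => if_neg (Finset.mem_compl.mp hj))]
        rw [show (∑ j ∈ Aᶜ, if j = j0 then Γ - (k:ℝ) else 0) = _ from Finset.sum_ite_eq' Aᶜ j0 _]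
        rw [if_pos hj0c]
      have hζsum : ∑ j, ζ j = Γ := by
        rw [← Finset.sum_add_sum_compl A ζ, hζsumA, hζsumAc]; ring
      have hval : ∑ j, z j * ζ j = (∑ j ∈ A, z j) + (Γ - k) * lam := by
        rw [← Finset.sum_add_sum_compl A (fun j => z j * ζ j)]
        congr 1
        · exact Finset.sum_congr rfl fun j hj => by rw [hζdef]; simp [if_pos hj]
        · have : ∀ j ∈ Aᶜ, z j * ζ j = (if j = j0 then z j * (Γ - k) else 0) := by
            intro j hj
            rw [hζdef]; simp only [if_neg (Finset.mem_compl.mp hj)]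
            split <;> simp
          rw [Finset.sum_congr rfl this, Finset.sum_ite_eq' Aᶜ j0, if_pos hj0c]
          ring
      refine ⟨(∑ j ∈ A, z j) + (Γ - k) * lam, ⟨ζ, ?_, hζsum.le, hval.symm⟩,
        fun j => z j - lam, ?_⟩
      · intro j
        rw [hζdef]
        dsimp only
        split
        · norm_num
        · split
          · constructor <;> [linarith; linarith]
          · norm_num
      · -- dual value computation
        have hsup : (⨆ j, |z j - (z j - lam)|) = lam := by
          have : ∀ j : Fin m, |z j - (z j - lam)| = lam := fun j => by
            rw [show z j - (z j - lam) = lam by ring, abs_of_pos hj0pos]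
          rw [funext this, ciSup_const]
        have hmaxsum : ∑ j, max (z j - lam) 0 = (∑ j ∈ A, z j) - k * lam := by
          rw [← Finset.sum_add_sum_compl A (fun j => max (z j - lam) 0)]
          have h1 : ∑ j ∈ A, max (z j - lam) 0 = ∑ j ∈ A, (z j - lam) :=
            Finset.sum_congr rfl fun j hj => max_eq_left (by linarith [hzA j hj])
          have h2 : ∑ j ∈ Aᶜ, max (z j - lam) 0 = 0 := by
            rw [Finset.sum_congr rfl (fun j hj => max_eq_right (by linarith [hj0max j hj]))]
            simp
          rw [h1, h2, Finset.sum_sub_distrib, Finset.sum_const, hcard]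
          simp [nsmul_eq_mul]
        rw [hsup, hmaxsum]
        ring
  obtain ⟨v, hvS, hvD⟩ := hstrong
  apply le_antisymm
  · exact csSup_le hSne fun s hs => le_csInf hDne fun d hd => hweak s hs d hd
  · exact le_trans (csInf_le hbddD hvD) (le_csSup hbddS hvS)
end

section
/- Let g : ℝ^d → ℝ be sublinear, σ ∈ ℝ^d, Σ_1, …, Σ_m ∈ ℝ^d and b ∈ ℝ^m, and define s_j = max{g(Σ_j) + b_j, g(−Σ_j) − b_j} for j = 1, …, m. If the Bertsimas–Sim condition for the box uncertainty set holds, i.e. g(σ) + ∑_{j=1}^m s_j ≤ 1, then the Roos et al. system for the box uncertainty set is feasible: there exist w ∈ ℝ^m and W_1, …, W_m ∈ ℝ^d (namely w_j = s_j and W_j = 0) such that ∑_{j=1}^m w_j + g(σ − ∑_{j=1}^m W_j) ≤ 1, g(W_j − Σ_j) − b_j ≤ w_j and g(W_j + Σ_j) + b_j ≤ w_j for all j. -/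
/-- The Bertsimas–Sim condition for the box uncertainty set implies feasibility of the
Roos et al. system (taking `w j = s j` and `W j = 0`), where
`s j = max (g (Σ j) + b j) (g (-Σ j) - b j)`. -/
theorem bertsimas_sim_implies_roos_box {d m : ℕ}
    (g : (Fin d → ℝ) → ℝ)
    (hg_add : ∀ x y, g (x + y) ≤ g x + g y)
    (hg_smul : ∀ t : ℝ, 0 ≤ t → ∀ x, g (t • x) = t * g x)
    (σ : Fin d → ℝ) (A : Fin m → (Fin d → ℝ)) (b : Fin m → ℝ)
    (s : Fin m → ℝ)
    (hs : ∀ j, s j = max (g (A j) + b j) (g (-A j) - b j))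
    (h : g σ + ∑ j, s j ≤ 1) :
    ∃ (w : Fin m → ℝ) (W : Fin m → (Fin d → ℝ)),
      ∑ j, w j + g (σ - ∑ j, W j) ≤ 1 ∧
      (∀ j, g (W j - A j) - b j ≤ w j) ∧
      (∀ j, g (W j + A j) + b j ≤ w j) := by
  refine ⟨s, fun _ => 0, ?_, fun j => ?_, fun j => ?_⟩
  · simp only [Finset.sum_const_zero, sub_zero]
    linarith
  · simp only [zero_sub, hs j]
    linarith [le_max_right (g (A j) + b j) (g (-A j) - b j)]
  · simp only [zero_add, hs j]
    linarith [le_max_left (g (A j) + b j) (g (-A j) - b j)]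
end
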